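/- Let m be a nonnegative integer and let α be a complex number. Then (-1)^m · π^{2m+2}/(4·(2m+1)!) · ( (α-1)^{2m+1} - (α+1)^{2m+1} ) + Σ_{k=0}^{m} (-1)^k ( (α-1)^{2k} + (α+1)^{2k} + 2α^{2k} ) · π^{2k}/(2k)! · λ(2m-2k+2) = 0, where 0^0 is interpreted as 1. -/

import Mathlib

/-!
Let `E_n` be the Euler polynomials, with generating function `2 e^{xt} / (e^t + 1)`; then
`E_n(x + 1) + E_n(x) = 2 x^n`. For odd `n = 2m + 1` the only nonzero constant `E_j(0)` of even
index is `E_0(0) = 1`, so `E_n(x) = x^n + ∑_k C(n, 2k) E_{n-2k}(0) x^{2k}`, and adding the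
difference equation at `x = α - 1` and `x = α` gives
`∑_k C(n, 2k) E_{n-2k}(0) ((α-1)^{2k} + (α+1)^{2k} + 2α^{2k}) = (α-1)^n - (α+1)^n`.
On the other hand `λ(s) = (1 - 2^{-s}) ζ(s)` and Euler's evaluation of `ζ(2j)` give
`λ(2i + 2) = (-1)^{i+1} π^{2i+2} E_{2i+1}(0) / (4 (2i+1)!)`, which turns the `k`-th term of the
sum in the theorem into `C(n, 2k) E_{n-2k}(0)` times a common factor.
-/

open Real Finset

/-- The Dirichlet lambda function at a natural-number argument `j`:
`λ(j) = ∑_{n=0}^∞ 1/(2n+1)^j`. -/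
noncomputable def dirichletLambda (j : ℕ) : ℝ := ∑' n : ℕ, 1 / (2 * (n : ℝ) + 1) ^ j

open scoped Nat

lemma sum_range_two_mul {M : Type*} [AddCommMonoid M] (f : ℕ → M) (n : ℕ) :
    ∑ i ∈ range (2 * n), f i = ∑ i ∈ range n, (f (2 * i) + f (2 * i + 1)) := by
  induction n with
  | zero => simp
  | succ n ih =>
    rw [mul_add, mul_one, sum_range_succ, sum_range_succ, sum_range_succ, ih, add_assoc]

section EulerPolynomials

open PowerSeries

/-- `E_j(0)`, the constant terms of the Euler polynomials (exponential generating function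
`2 / (e^t + 1)`), through their classical expression in Bernoulli numbers. -/
noncomputable def eulerZero (j : ℕ) : ℚ := 2 * (1 - 2 ^ (j + 1)) * bernoulli (j + 1) / (j + 1)

lemma eulerZero_zero : eulerZero 0 = 1 := by norm_num [eulerZero, bernoulli_one]

lemma eulerZero_two_mul {i : ℕ} (hi : i ≠ 0) : eulerZero (2 * i) = 0 := by
  rw [eulerZero, bernoulli_eq_bernoulli'_of_ne_one (by omega),
    bernoulli'_eq_zero_of_odd ⟨i, rfl⟩ (by omega)]
  simp

noncomputable def eulerZeroSeries : ℚ⟦X⟧ := mk fun j => eulerZero j / j !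

lemma X_mul_eulerZeroSeries :
    X * eulerZeroSeries = 2 * (bernoulliPowerSeries ℚ - rescale 2 (bernoulliPowerSeries ℚ)) := by
  rw [← map_ofNat (C (R := ℚ)) 2]
  ext (_ | n)
  · rw [coeff_zero_X_mul, coeff_C_mul, map_sub, coeff_rescale]; simp
  · have hn : ((n : ℚ) + 1) ≠ 0 := by positivity
    simp only [coeff_succ_X_mul, eulerZeroSeries, coeff_mk, coeff_C_mul, map_sub,
      coeff_rescale, bernoulliPowerSeries, eulerZero, Nat.factorial_succ, Algebra.algebraMap_self,
      RingHom.id_apply]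
    push_cast
    field_simp

lemma exp_add_one_mul_eulerZeroSeries : (exp ℚ + 1) * eulerZeroSeries = 2 := by
  have hB := bernoulliPowerSeries_mul_exp_sub_one ℚ
  have hB2 : rescale (2 : ℚ) (bernoulliPowerSeries ℚ) * (exp ℚ ^ 2 - 1) = 2 * X := by
    simpa [exp_pow_eq_rescale_exp, rescale_X, map_ofNat] using congrArg (rescale (2 : ℚ)) hB
  have hne : (exp ℚ - 1) * X ≠ 0 := by
    refine mul_ne_zero (fun h => ?_) X_ne_zero
    simpa [coeff_exp] using congrArg (coeff 1) h
  refine mul_right_cancel₀ hne ?_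
  linear_combination (exp ℚ - 1) * (exp ℚ + 1) * X_mul_eulerZeroSeries
    + 2 * (exp ℚ + 1) * hB - 2 * hB2

noncomputable def eulerPoly (n : ℕ) : Polynomial ℚ :=
  ∑ j ∈ range (n + 1), Polynomial.monomial j ((n.choose j : ℚ) * eulerZero (n - j))

variable {A : Type*} [CommRing A] [Algebra ℚ A]

lemma aeval_eulerPoly (n : ℕ) (x : A) :
    Polynomial.aeval x (eulerPoly n) =
      ∑ j ∈ range (n + 1), (n.choose j : A) * algebraMap ℚ A (eulerZero (n - j)) * x ^ j := by
  simp [eulerPoly, Polynomial.aeval_monomial]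

lemma rescale_exp_mul_map_eulerZeroSeries (t : A) :
    rescale t (exp A) * map (algebraMap ℚ A) eulerZeroSeries =
      mk fun n => algebraMap ℚ A (1 / n !) * Polynomial.aeval t (eulerPoly n) := by
  ext n
  rw [coeff_mul, Finset.Nat.sum_antidiagonal_eq_sum_range_succ_mk, coeff_mk, aeval_eulerPoly,
    mul_sum]
  refine sum_congr rfl fun j hj => ?_
  have hjn : j ≤ n := Nat.lt_succ_iff.mp (mem_range.mp hj)
  have hq : (1 / j ! : ℚ) * (eulerZero (n - j) / (n - j)!) =
      1 / n ! * (n.choose j * eulerZero (n - j)) := by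
    rw [Nat.cast_choose ℚ hjn]
    field_simp
  have hqA := congrArg (algebraMap ℚ A) hq
  simp only [map_mul, map_natCast] at hqA
  simp only [coeff_rescale, coeff_exp, coeff_map, eulerZeroSeries, coeff_mk]
  linear_combination t ^ j * hqA

lemma aeval_eulerPoly_add_one_add (n : ℕ) (x : A) :
    Polynomial.aeval (x + 1) (eulerPoly n) + Polynomial.aeval x (eulerPoly n) = 2 * x ^ n := by
  have hM : (exp A + 1) * map (algebraMap ℚ A) eulerZeroSeries = 2 := by
    simpa [map_exp, map_ofNat] using
      congrArg (map (algebraMap ℚ A)) exp_add_one_mul_eulerZeroSeries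
  have hgen : rescale (x + 1) (exp A) * map (algebraMap ℚ A) eulerZeroSeries +
      rescale x (exp A) * map (algebraMap ℚ A) eulerZeroSeries =
        rescale x (exp A) + rescale x (exp A) := by
    rw [← exp_mul_exp_eq_exp_add x 1, rescale_one, RingHom.id_apply]
    linear_combination rescale x (exp A) * hM
  have hcoeff := congrArg (coeff n) hgen
  simp only [rescale_exp_mul_map_eulerZeroSeries, map_add, coeff_mk, coeff_rescale,
    coeff_exp] at hcoeff
  have hu : IsUnit (algebraMap ℚ A (1 / n !)) :=
    (IsUnit.mk0 (1 / n ! : ℚ) (by positivity)).map (algebraMap ℚ A)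
  refine hu.mul_right_inj.mp ?_
  linear_combination hcoeff

lemma aeval_eulerPoly_two_mul_add_one (m : ℕ) (x : A) :
    Polynomial.aeval x (eulerPoly (2 * m + 1)) = x ^ (2 * m + 1) +
      ∑ k ∈ range (m + 1), ((2 * m + 1).choose (2 * k) : A) *
        algebraMap ℚ A (eulerZero (2 * m + 1 - 2 * k)) * x ^ (2 * k) := by
  rw [aeval_eulerPoly, show 2 * m + 1 + 1 = 2 * (m + 1) by ring, sum_range_two_mul,
    sum_add_distrib, add_comm]
  congr 1
  rw [sum_eq_single_of_mem m (self_mem_range_succ m)]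
  · simp [eulerZero_zero]
  · intro k hk hkm
    have hmk : m - k ≠ 0 := by have := mem_range.mp hk; omega
    rw [show 2 * m + 1 - (2 * k + 1) = 2 * (m - k) by omega, eulerZero_two_mul hmk]
    simp

lemma sum_choose_mul_eulerZero_mul (m : ℕ) (α : A) :
    ∑ k ∈ range (m + 1), ((2 * m + 1).choose (2 * k) : A) *
        algebraMap ℚ A (eulerZero (2 * m + 1 - 2 * k)) *
          ((α - 1) ^ (2 * k) + (α + 1) ^ (2 * k) + 2 * α ^ (2 * k)) =
      (α - 1) ^ (2 * m + 1) - (α + 1) ^ (2 * m + 1) := by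
  have hlow := aeval_eulerPoly_add_one_add (2 * m + 1) (α - 1)
  have hhigh := aeval_eulerPoly_add_one_add (2 * m + 1) α
  rw [sub_add_cancel] at hlow
  simp only [aeval_eulerPoly_two_mul_add_one] at hlow hhigh
  simp only [mul_add, sum_add_distrib, mul_left_comm _ (2 : A) (_ ^ _), ← mul_sum]
  linear_combination hlow + hhigh

end EulerPolynomials

lemma hasSum_dirichletLambda {j : ℕ} (hj : 1 < j) :
    HasSum (fun n : ℕ => 1 / (2 * (n : ℝ) + 1) ^ j) (dirichletLambda j) :=
  ((Real.summable_one_div_nat_pow.mpr hj).comp_injective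
    (fun a b (hab : 2 * a + 1 = 2 * b + 1) => by omega)).congr (fun n => by simp) |>.hasSum

lemma dirichletLambda_eq_mul_tsum {j : ℕ} (hj : 1 < j) :
    dirichletLambda j = (1 - (2 ^ j)⁻¹) * ∑' n : ℕ, 1 / (n : ℝ) ^ j := by
  have hzeta := (Real.summable_one_div_nat_pow.mpr hj).hasSum
  have heven : HasSum (fun n : ℕ => 1 / ((2 * n : ℕ) : ℝ) ^ j)
      ((2 ^ j)⁻¹ * ∑' n : ℕ, 1 / (n : ℝ) ^ j) :=
    (hzeta.mul_left _).congr_fun fun n => by push_cast; rw [mul_pow]; field_simp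
  have hodd : HasSum (fun n : ℕ => 1 / ((2 * n + 1 : ℕ) : ℝ) ^ j) (dirichletLambda j) :=
    (hasSum_dirichletLambda hj).congr_fun fun n => by push_cast; rfl
  linear_combination -hzeta.unique (heven.even_add_odd hodd)

lemma dirichletLambda_two_mul_add_two (i : ℕ) :
    dirichletLambda (2 * i + 2) =
      (-1) ^ (i + 1) * π ^ (2 * i + 2) * eulerZero (2 * i + 1) / (4 * (2 * i + 1)!) := by
  have hzeta := hasSum_zeta_nat (k := i + 1) (by omega)
  rw [show 2 * (i + 1) = 2 * i + 2 by ring, show 2 * i + 2 - 1 = 2 * i + 1 by omega] at hzeta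
  rw [dirichletLambda_eq_mul_tsum (by omega), hzeta.tsum_eq, eulerZero,
    Nat.factorial_succ (2 * i + 1)]
  push_cast
  field_simp
  ring

lemma neg_one_pow_mul_pi_pow_mul_dirichletLambda {m k : ℕ} (hk : k ≤ m) :
    (-1) ^ k * (π ^ (2 * k) / (2 * k)!) * dirichletLambda (2 * m - 2 * k + 2) =
      (-1) ^ (m + 1) * (π ^ (2 * m + 2) / (4 * (2 * m + 1)!)) *
        ((2 * m + 1).choose (2 * k) * eulerZero (2 * m + 1 - 2 * k)) := by
  obtain ⟨i, rfl⟩ := Nat.exists_eq_add_of_le hk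
  rw [show 2 * (k + i) - 2 * k + 2 = 2 * i + 2 by omega,
    show 2 * (k + i) + 1 - 2 * k = 2 * i + 1 by omega, dirichletLambda_two_mul_add_two,
    Nat.cast_choose ℝ (show 2 * k ≤ 2 * (k + i) + 1 by omega),
    show 2 * (k + i) + 1 - 2 * k = 2 * i + 1 by omega]
  field_simp
  ring

theorem lambda_recurrence_family_second_odd (m : ℕ) (α : ℂ) :
    (-1 : ℂ) ^ m * ((π : ℂ) ^ (2 * m + 2) / (4 * (Nat.factorial (2 * m + 1)))) *
        ((α - 1) ^ (2 * m + 1) - (α + 1) ^ (2 * m + 1)) +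
      ∑ k ∈ Finset.range (m + 1),
        (-1 : ℂ) ^ k * ((α - 1) ^ (2 * k) + (α + 1) ^ (2 * k) + 2 * α ^ (2 * k)) *
          ((π : ℂ) ^ (2 * k) / (Nat.factorial (2 * k))) *
            (dirichletLambda (2 * m - 2 * k + 2) : ℂ) = 0 := by
  have hterm : ∀ k ∈ range (m + 1),
      (-1 : ℂ) ^ k * ((α - 1) ^ (2 * k) + (α + 1) ^ (2 * k) + 2 * α ^ (2 * k)) *
          ((π : ℂ) ^ (2 * k) / (Nat.factorial (2 * k))) *
            (dirichletLambda (2 * m - 2 * k + 2) : ℂ) =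
        (-1) ^ (m + 1) * ((π : ℂ) ^ (2 * m + 2) / (4 * (Nat.factorial (2 * m + 1)))) *
          (((2 * m + 1).choose (2 * k) : ℂ) * algebraMap ℚ ℂ (eulerZero (2 * m + 1 - 2 * k)) *
            ((α - 1) ^ (2 * k) + (α + 1) ^ (2 * k) + 2 * α ^ (2 * k))) := fun k hk => by
    have h := congrArg (fun r : ℝ => (r : ℂ))
      (neg_one_pow_mul_pi_pow_mul_dirichletLambda (Nat.lt_succ_iff.mp (mem_range.mp hk)))
    push_cast at h
    rw [eq_ratCast]
    linear_combination ((α - 1) ^ (2 * k) + (α + 1) ^ (2 * k) + 2 * α ^ (2 * k)) * h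
  rw [sum_congr rfl hterm, ← mul_sum, sum_choose_mul_eulerZero_mul]
  ring
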